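/- Let r > 0. There exists a constant c > 0, depending only on r, such that for every continuously differentiable u : E → ℝ³ on E = {x ∈ ℝ³ : |x| > r, x₃ < 0} with ∫_E |u|²/(1+|x|²) dx < ∞ and ∫_E |∇u|² dx < ∞, one has the Hardy-type inequality ∫_E |u(x)|²/(1+|x|²) dx ≤ c ∫_E |∇u(x)|² dx. -/

import Mathlib

/-
In polar coordinates `x = s ω` the volume element is `s² ds dω`, and a ray with `ω₃ < 0` meets
the domain in `s > r` (rays with `ω₃ ≥ 0` miss it). On such a ray, `s² / (1 + s²) ≤ 1` and the
one-dimensional Hardy inequality `∫_r^∞ |f|² ≤ 4 ∫_r^∞ s² |f'|²` for `f(s) = u(s ω)`, whose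
derivative `∇u(s ω) ω` is bounded by `|∇u(s ω)|`, give the ray-wise inequality with `c = 4`.
The one-dimensional inequality comes from integrating `(s |f|²)' = |f|² + 2 s ⟪f, f'⟫` over
`[a, b]` with AM-GM, and letting `b → ∞` along radii where `b |f(b)|²` is small, which exist
because `|f|²` is integrable and `1/b` is not.
-/

open MeasureTheory Metric Set

noncomputable section

abbrev E3 := EuclideanSpace ℝ (Fin 3)
abbrev E2 := EuclideanSpace ℝ (Fin 2)

/-- The open lower half-space `{x : x₃ < 0}`. -/
def lowerHalf : Set E3 := {x | x 2 < 0}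

/-- The lower half-ball `B⁻_r(0) = {|x| < r, x₃ < 0}`. -/
def negBall (r : ℝ) : Set E3 := {x | ‖x‖ < r ∧ x 2 < 0}

/-- Jacobian matrix of a vector field: `(jac u x) i j = ∂uᵢ/∂xⱼ (x)`. -/
def jac (u : E3 → E3) (x : E3) : Matrix (Fin 3) (Fin 3) ℝ :=
  fun i j => fderiv ℝ u x (EuclideanSpace.single j 1) i

/-- Symmetric part of the Jacobian (strain tensor) `∇̂u`. -/
def strain (u : E3 → E3) (x : E3) : Matrix (Fin 3) (Fin 3) ℝ :=
  fun i j => (jac u x i j + jac u x j i) / 2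

/-- Squared Frobenius norm of a 3×3 matrix. -/
def frob2 (M : Matrix (Fin 3) (Fin 3) ℝ) : ℝ := ∑ i, ∑ j, (M i j)^2

/-- Divergence of a vector field. -/
def divg (u : E3 → E3) (x : E3) : ℝ := ∑ i, jac u x i i

/-- Projection on the first two coordinates. -/
def proj12 (x : E3) : E2 :=
  (x 0) • EuclideanSpace.single 0 1 + (x 1) • EuclideanSpace.single 1 1

/-- Embedding of the plane `{x₃ = 0}` into `ℝ³`: `x' ↦ (x'₁, x'₂, 0)`. -/
def emb2 (x' : E2) : E3 :=
  (x' 0) • EuclideanSpace.single 0 1 + (x' 1) • EuclideanSpace.single 1 1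

/-- Partial derivative of a scalar field in the k-th coordinate direction. -/
def pd (f : E3 → ℝ) (k : Fin 3) (x : E3) : ℝ := fderiv ℝ f x (EuclideanSpace.single k 1)

open Filter Topology

section Hardy1D

variable {F : Type*} [NormedAddCommGroup F] [InnerProductSpace ℝ F]

lemma frequently_mul_lt_of_integrableOn_Ioi {g : ℝ → ℝ} {a : ℝ} (hg : IntegrableOn g (Ioi a))
    {ε : ℝ} (hε : 0 < ε) : ∃ᶠ x in atTop, x * g x < ε := by
  by_contra h
  obtain ⟨M, hM⟩ := eventually_atTop.1 (not_frequently.1 h)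
  set b := max M (max a 0)
  have hinv : IntegrableOn (fun x : ℝ => x⁻¹) (Ioi b) := by
    refine Integrable.mono' ((hg.mono_set (Ioi_subset_Ioi ?_)).const_mul ε⁻¹)
      measurable_inv.aestronglyMeasurable ?_
    · exact (le_max_left _ _).trans (le_max_right _ _)
    filter_upwards [ae_restrict_mem measurableSet_Ioi] with x (hx : b < x)
    have hx0 : 0 < x := lt_of_le_of_lt ((le_max_right _ _).trans (le_max_right _ _)) hx
    have hgx : ε ≤ x * g x := not_lt.1 (hM x (((le_max_left _ _).trans_lt hx).le))
    rw [Real.norm_of_nonneg (inv_nonneg.2 hx0.le), inv_le_iff_one_le_mul₀ hx0]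
    calc (1 : ℝ) = ε⁻¹ * ε := (inv_mul_cancel₀ hε.ne').symm
      _ ≤ ε⁻¹ * (x * g x) := by gcongr
      _ = ε⁻¹ * g x * x := by ring
  exact not_integrableOn_Ioi_inv hinv

lemma intervalIntegral_norm_sq_le {f f' : ℝ → F} {a b : ℝ} (ha : 0 ≤ a) (hab : a ≤ b)
    (hf : ∀ s ∈ Icc a b, HasDerivAt f (f' s) s) (hf' : ContinuousOn f' (Icc a b)) :
    (∫ s in a..b, ‖f s‖ ^ 2) ≤ 2 * (b * ‖f b‖ ^ 2) + 4 * ∫ s in a..b, s ^ 2 * ‖f' s‖ ^ 2 := by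
  have hf_cont : ContinuousOn f (Icc a b) := fun s hs => (hf s hs).continuousAt.continuousWithinAt
  have hint : ∀ {φ : ℝ → ℝ}, ContinuousOn φ (Icc a b) → IntervalIntegrable φ volume a b :=
    fun hφ => hφ.intervalIntegrable_of_Icc hab
  have hftc : ∫ s in a..b, (‖f s‖ ^ 2 + s * (2 * inner ℝ (f s) (f' s)) : ℝ) =
      b * ‖f b‖ ^ 2 - a * ‖f a‖ ^ 2 := by
    refine intervalIntegral.integral_eq_sub_of_hasDerivAt (f := fun s => s * ‖f s‖ ^ 2)
      (fun s hs => ?_) ?_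
    · rw [uIcc_of_le hab] at hs
      simpa using (hasDerivAt_id' s).fun_mul (hf s hs).norm_sq
    · exact hint (by fun_prop)
  -- `|2 s ⟪f, f'⟫| ≤ 2 |s| ‖f‖ ‖f'‖ ≤ ‖f‖² / 2 + 2 s² ‖f'‖²`
  have hamgm : ∀ s, ‖f s‖ ^ 2 / 2 - 2 * (s ^ 2 * ‖f' s‖ ^ 2) ≤
      ‖f s‖ ^ 2 + s * (2 * inner ℝ (f s) (f' s)) := by
    intro s
    have h1 := abs_real_inner_le_norm (f s) (f' s)
    have h2 := neg_abs_le (s * inner ℝ (f s) (f' s))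
    rw [abs_mul] at h2
    nlinarith [sq_nonneg (‖f s‖ - 2 * |s| * ‖f' s‖), sq_abs s,
      mul_le_mul_of_nonneg_left h1 (abs_nonneg s)]
  have hmono := intervalIntegral.integral_mono_on hab (hint (by fun_prop)) (hint (by fun_prop))
    fun s _ => hamgm s
  rw [intervalIntegral.integral_sub (hint (by fun_prop)) (hint (by fun_prop)),
    intervalIntegral.integral_div, intervalIntegral.integral_const_mul, hftc] at hmono
  linarith [mul_nonneg ha (sq_nonneg ‖f a‖)]

lemma integral_Ioi_norm_sq_le_of_Ici {f f' : ℝ → F} {a : ℝ} (ha : 0 ≤ a)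
    (hf : ∀ s ∈ Ici a, HasDerivAt f (f' s) s) (hf' : ContinuousOn f' (Ici a))
    (hfi : IntegrableOn (fun s => ‖f s‖ ^ 2) (Ioi a))
    (hfi' : IntegrableOn (fun s => s ^ 2 * ‖f' s‖ ^ 2) (Ioi a)) :
    (∫ s in Ioi a, ‖f s‖ ^ 2) ≤ 4 * ∫ s in Ioi a, s ^ 2 * ‖f' s‖ ^ 2 := by
  set I := ∫ s in Ioi a, ‖f s‖ ^ 2
  set J := ∫ s in Ioi a, s ^ 2 * ‖f' s‖ ^ 2
  by_contra! hJI
  have hlim : Tendsto (fun b => ∫ s in a..b, ‖f s‖ ^ 2) atTop (𝓝 I) :=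
    intervalIntegral_tendsto_integral_Ioi a hfi tendsto_id
  obtain ⟨b, hb_small, hb_close, hab⟩ :=
    ((frequently_mul_lt_of_integrableOn_Ioi hfi (ε := (I - 4 * J) / 4) (by linarith)).and_eventually
      ((hlim.eventually (lt_mem_nhds (show (I + 4 * J) / 2 < I by linarith))).and
        (eventually_ge_atTop a))).exists
  have hJb : ∫ s in a..b, s ^ 2 * ‖f' s‖ ^ 2 ≤ J := by
    rw [intervalIntegral.integral_of_le hab]
    exact setIntegral_mono_set hfi' (.of_forall fun s => by positivity)
      Ioc_subset_Ioi_self.eventuallyLE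
  have := intervalIntegral_norm_sq_le ha hab (fun s hs => hf s hs.1) (hf'.mono Icc_subset_Ici_self)
  linarith

lemma integral_Ioi_norm_sq_le {f f' : ℝ → F} {a : ℝ} (ha : 0 ≤ a)
    (hf : ∀ s ∈ Ioi a, HasDerivAt f (f' s) s) (hf' : ContinuousOn f' (Ioi a))
    (hfi : IntegrableOn (fun s => ‖f s‖ ^ 2) (Ioi a))
    (hfi' : IntegrableOn (fun s => s ^ 2 * ‖f' s‖ ^ 2) (Ioi a)) :
    (∫ s in Ioi a, ‖f s‖ ^ 2) ≤ 4 * ∫ s in Ioi a, s ^ 2 * ‖f' s‖ ^ 2 := by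
  have hlim : Tendsto (fun b => ∫ s in Ioi b, ‖f s‖ ^ 2 ∂volume.restrict (Ioi a)) (𝓝[>] a)
      (𝓝 (∫ s in Ioi a, ‖f s‖ ^ 2)) :=
    AECover.integral_tendsto_of_countably_generated
      (aecover_Ioi_of_Ioi (tendsto_id.mono_left nhdsWithin_le_nhds)) hfi
  refine le_of_tendsto hlim ?_
  filter_upwards [self_mem_nhdsWithin] with b (hab : a < b)
  have hsub : Ioi b ⊆ Ioi a := Ioi_subset_Ioi hab.le
  rw [Measure.restrict_restrict measurableSet_Ioi, inter_eq_left.2 hsub]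
  calc (∫ s in Ioi b, ‖f s‖ ^ 2)
      ≤ 4 * ∫ s in Ioi b, s ^ 2 * ‖f' s‖ ^ 2 :=
        integral_Ioi_norm_sq_le_of_Ici (ha.trans hab.le) (fun s hs => hf s (hab.trans_le hs))
          (hf'.mono (Ici_subset_Ioi.2 hab)) (hfi.mono_set hsub) (hfi'.mono_set hsub)
    _ ≤ 4 * ∫ s in Ioi a, s ^ 2 * ‖f' s‖ ^ 2 := by
        gcongr 4 * ?_
        exact setIntegral_mono_set hfi' (.of_forall fun s => by positivity) hsub.eventuallyLE

end Hardy1D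

namespace MeasureTheory.Measure

lemma integral_volumeIoiPow (n : ℕ) (φ : ℝ → ℝ) :
    ∫ s, φ s ∂(volumeIoiPow n) = ∫ s in Ioi (0 : ℝ), s ^ n * φ s := by
  simp only [volumeIoiPow, ENNReal.ofReal]
  rw [integral_withDensity_eq_integral_smul (measurable_subtype_coe.pow_const n).real_toNNReal,
    integral_subtype_comap measurableSet_Ioi fun s => Real.toNNReal (s ^ n) • φ s]
  refine setIntegral_congr_fun measurableSet_Ioi fun s (hs : 0 < s) => ?_
  rw [NNReal.smul_def, Real.coe_toNNReal _ (pow_nonneg hs.le n), smul_eq_mul]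

lemma integrable_volumeIoiPow_iff (n : ℕ) (φ : ℝ → ℝ) :
    Integrable (fun s : Ioi (0 : ℝ) => φ s) (volumeIoiPow n) ↔
      IntegrableOn (fun s => s ^ n * φ s) (Ioi 0) := by
  simp only [volumeIoiPow, ENNReal.ofReal]
  rw [integrable_withDensity_iff_integrable_smul (measurable_subtype_coe.pow_const n).real_toNNReal,
    integrableOn_iff_comap_subtypeVal measurableSet_Ioi]
  refine integrable_congr (.of_forall fun s => ?_)
  simp only [Function.comp_apply, NNReal.smul_def, Real.coe_toNNReal _ (pow_nonneg s.2.out.le n),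
    smul_eq_mul]

end MeasureTheory.Measure

lemma measurableEmbedding_smul_sphere_Ioi {E : Type*} [NormedAddCommGroup E] [NormedSpace ℝ E]
    [MeasurableSpace E] [BorelSpace E] :
    MeasurableEmbedding (fun p : sphere (0 : E) 1 × Ioi (0 : ℝ) => (p.2 : ℝ) • (p.1 : E)) :=
  (MeasurableEmbedding.subtype_coe (measurableSet_singleton (0 : E)).compl).comp
    (homeomorphUnitSphereProd E).symm.measurableEmbedding

section Polar

variable {E : Type*} [NormedAddCommGroup E] [NormedSpace ℝ E] [FiniteDimensional ℝ E]
  [MeasurableSpace E] [BorelSpace E] [Nontrivial E] (μ : Measure E) [μ.IsAddHaarMeasure]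

open Measure

lemma measurePreserving_smul_sphere_Ioi :
    MeasurePreserving (fun p : sphere (0 : E) 1 × Ioi (0 : ℝ) => (p.2 : ℝ) • (p.1 : E))
      (μ.toSphere.prod (volumeIoiPow (Module.finrank ℝ E - 1))) μ := by
  have h := (μ.measurePreserving_homeomorphUnitSphereProd).symm
    (homeomorphUnitSphereProd E).toMeasurableEquiv
  have h2 := measurePreserving_subtype_coe (μa := μ) (measurableSet_singleton (0 : E)).compl
  rw [restrict_compl_singleton] at h2
  exact h2.comp h

lemma integral_le_mul_integral_of_rays {F G : E → ℝ} (hF : Integrable F μ) (hG : Integrable G μ)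
    {c : ℝ} (h : ∀ᵐ ω : sphere (0 : E) 1 ∂μ.toSphere,
      IntegrableOn (fun s => s ^ (Module.finrank ℝ E - 1) * F (s • (ω : E))) (Ioi 0) →
      IntegrableOn (fun s => s ^ (Module.finrank ℝ E - 1) * G (s • (ω : E))) (Ioi 0) →
      ∫ s in Ioi 0, s ^ (Module.finrank ℝ E - 1) * F (s • (ω : E)) ≤
        c * ∫ s in Ioi 0, s ^ (Module.finrank ℝ E - 1) * G (s • (ω : E))) :
    ∫ x, F x ∂μ ≤ c * ∫ x, G x ∂μ := by
  have hmp := measurePreserving_smul_sphere_Ioi μ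
  have hF' := (hmp.integrable_comp_emb measurableEmbedding_smul_sphere_Ioi).2 hF
  have hG' := (hmp.integrable_comp_emb measurableEmbedding_smul_sphere_Ioi).2 hG
  simp only [Function.comp_def] at hF' hG'
  rw [← hmp.integral_comp measurableEmbedding_smul_sphere_Ioi,
    ← hmp.integral_comp measurableEmbedding_smul_sphere_Ioi, integral_prod _ hF',
    integral_prod _ hG', ← integral_const_mul]
  refine integral_mono_ae hF'.integral_prod_left (hG'.integral_prod_left.const_mul c) ?_
  filter_upwards [h, hF'.prod_right_ae, hG'.prod_right_ae] with ω hω hFω hGω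
  rw [integral_volumeIoiPow _ fun s => F (s • (ω : E)),
    integral_volumeIoiPow _ fun s => G (s • (ω : E))]
  exact hω ((integrable_volumeIoiPow_iff _ fun s => F (s • (ω : E))).1 hFω)
    ((integrable_volumeIoiPow_iff _ fun s => G (s • (ω : E))).1 hGω)

lemma setIntegral_le_mul_setIntegral_of_rays {S : Set E} (hS : MeasurableSet S) {F G : E → ℝ}
    (hF : IntegrableOn F S μ) (hG : IntegrableOn G S μ) {c : ℝ}
    (h : ∀ᵐ ω : sphere (0 : E) 1 ∂μ.toSphere,
      IntegrableOn (fun s => s ^ (Module.finrank ℝ E - 1) * F (s • (ω : E)))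
        {s | 0 < s ∧ s • (ω : E) ∈ S} →
      IntegrableOn (fun s => s ^ (Module.finrank ℝ E - 1) * G (s • (ω : E)))
        {s | 0 < s ∧ s • (ω : E) ∈ S} →
      ∫ s in {s | 0 < s ∧ s • (ω : E) ∈ S}, s ^ (Module.finrank ℝ E - 1) * F (s • (ω : E)) ≤
        c * ∫ s in {s | 0 < s ∧ s • (ω : E) ∈ S}, s ^ (Module.finrank ℝ E - 1) * G (s • (ω : E))) :
    ∫ x in S, F x ∂μ ≤ c * ∫ x in S, G x ∂μ := by
  rw [← integral_indicator hS, ← integral_indicator hS]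
  refine integral_le_mul_integral_of_rays μ ((integrable_indicator_iff hS).2 hF)
    ((integrable_indicator_iff hS).2 hG) ?_
  filter_upwards [h] with ω hω
  have hray : MeasurableSet ((fun s : ℝ => s • (ω : E)) ⁻¹' S) :=
    hS.preimage (measurable_id.smul_const _)
  have hind : ∀ H : E → ℝ,
      (fun s : ℝ => s ^ (Module.finrank ℝ E - 1) * S.indicator H (s • ω)) =
        ((fun s : ℝ => s • (ω : E)) ⁻¹' S).indicator
          fun s => s ^ (Module.finrank ℝ E - 1) * H (s • ω) := by
    intro H
    ext s
    by_cases hs : s • (ω : E) ∈ S <;> simp [hs]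
  have hset : (fun s : ℝ => s • (ω : E)) ⁻¹' S ∩ Ioi 0 = {s | 0 < s ∧ s • (ω : E) ∈ S} :=
    inter_comm _ _
  simp only [hind, integrableOn_indicator_iff hray, setIntegral_indicator hray, hset]
  exact hω

end Polar

lemma norm_fderiv_apply_sq_le (u : E3 → E3) (x v : E3) :
    ‖fderiv ℝ u x v‖ ^ 2 ≤ frob2 (jac u x) * ‖v‖ ^ 2 := by
  have hcoord : ∀ i, fderiv ℝ u x v i = ∑ j, jac u x i j * v j := by
    intro i
    conv_lhs => rw [← (EuclideanSpace.basisFun (Fin 3) ℝ).sum_repr v]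
    simp [jac, mul_comm]
  rw [EuclideanSpace.norm_sq_eq, EuclideanSpace.norm_sq_eq, frob2, Finset.sum_mul]
  refine Finset.sum_le_sum fun i _ => ?_
  simpa only [hcoord, Real.norm_eq_abs, sq_abs] using
    Finset.sum_mul_sq_le_sq_mul_sq Finset.univ (jac u x i) v

lemma hasDerivAt_comp_smul {E F : Type*} [NormedAddCommGroup E] [NormedSpace ℝ E]
    [NormedAddCommGroup F] [NormedSpace ℝ F] {u : E → F} {U : Set E} (hU : IsOpen U)
    (hu : ContDiffOn ℝ 1 u U) {ω : E} {s : ℝ} (hs : s • ω ∈ U) :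
    HasDerivAt (fun t : ℝ => u (t • ω)) (fderiv ℝ u (s • ω) ω) s := by
  have hray : HasDerivAt (fun t : ℝ => t • ω) ω s := by
    simpa using (hasDerivAt_id s).smul_const ω
  exact ((hu.contDiffAt (hU.mem_nhds hs)).differentiableAt one_ne_zero).hasFDerivAt.comp_hasDerivAt
    s hray

lemma continuousOn_fderiv_comp_smul {E F : Type*} [NormedAddCommGroup E] [NormedSpace ℝ E]
    [NormedAddCommGroup F] [NormedSpace ℝ F] {u : E → F} {U : Set E} (hU : IsOpen U)
    (hu : ContDiffOn ℝ 1 u U) (ω : E) :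
    ContinuousOn (fun s : ℝ => fderiv ℝ u (s • ω) ω) {s | s • ω ∈ U} :=
  ((hu.continuousOn_fderiv_of_isOpen hU le_rfl).comp
    (continuous_id.smul continuous_const).continuousOn fun _ hs => hs).clm_apply continuousOn_const

lemma hardy_along_ray {u : E3 → E3} {U : Set E3} (hU : IsOpen U)
    (hu : ContDiffOn ℝ 1 u U) {ω : E3} (hω : ‖ω‖ = 1) {r : ℝ} (hr : 0 < r)
    (hray : ∀ s ∈ Ioi r, s • ω ∈ U)
    (h1 : IntegrableOn (fun s => s ^ 2 * (‖u (s • ω)‖ ^ 2 / (1 + ‖s • ω‖ ^ 2))) (Ioi r))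
    (h2 : IntegrableOn (fun s => s ^ 2 * frob2 (jac u (s • ω))) (Ioi r)) :
    ∫ s in Ioi r, s ^ 2 * (‖u (s • ω)‖ ^ 2 / (1 + ‖s • ω‖ ^ 2)) ≤
      4 * ∫ s in Ioi r, s ^ 2 * frob2 (jac u (s • ω)) := by
  have hnorm : ∀ s : ℝ, ‖s • ω‖ ^ 2 = s ^ 2 := fun s => by
    rw [norm_smul, hω, mul_one, Real.norm_eq_abs, sq_abs]
  have hd : ∀ s ∈ Ioi r, HasDerivAt (fun t : ℝ => u (t • ω)) (fderiv ℝ u (s • ω) ω) s :=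
    fun s hs => hasDerivAt_comp_smul hU hu (hray s hs)
  have hdu : ContinuousOn (fun s : ℝ => fderiv ℝ u (s • ω) ω) (Ioi r) :=
    (continuousOn_fderiv_comp_smul hU hu ω).mono hray
  have hfi : IntegrableOn (fun s => ‖u (s • ω)‖ ^ 2) (Ioi r) := by
    refine Integrable.mono' (h1.const_mul ((1 + r ^ 2) / r ^ 2)) ?_ ?_
    · exact (ContinuousOn.aestronglyMeasurable (fun s hs =>
        (hd s hs).continuousAt.continuousWithinAt.norm.pow 2) measurableSet_Ioi)
    filter_upwards [ae_restrict_mem measurableSet_Ioi] with s (hs : r < s)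
    have hr2 : r ^ 2 ≤ s ^ 2 := pow_le_pow_left₀ hr.le hs.le 2
    rw [Real.norm_of_nonneg (by positivity), hnorm]
    set a := ‖u (s • ω)‖ ^ 2
    have hgap : (1 + r ^ 2) / r ^ 2 * (s ^ 2 * (a / (1 + s ^ 2))) - a =
        a * (s ^ 2 - r ^ 2) / (r ^ 2 * (1 + s ^ 2)) := by
      field_simp
      ring
    have : 0 ≤ a * (s ^ 2 - r ^ 2) / (r ^ 2 * (1 + s ^ 2)) :=
      div_nonneg (mul_nonneg (by positivity) (sub_nonneg.2 hr2)) (by positivity)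
    linarith
  have hfi' : IntegrableOn (fun s => s ^ 2 * ‖fderiv ℝ u (s • ω) ω‖ ^ 2) (Ioi r) := by
    refine Integrable.mono' h2
      ((by fun_prop : ContinuousOn _ _).aestronglyMeasurable measurableSet_Ioi) ?_
    refine .of_forall fun s => ?_
    rw [Real.norm_of_nonneg (by positivity)]
    gcongr
    simpa [hω] using norm_fderiv_apply_sq_le u (s • ω) ω
  calc ∫ s in Ioi r, s ^ 2 * (‖u (s • ω)‖ ^ 2 / (1 + ‖s • ω‖ ^ 2))
      ≤ ∫ s in Ioi r, ‖u (s • ω)‖ ^ 2 := by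
        refine setIntegral_mono_on h1 hfi measurableSet_Ioi fun s _ => ?_
        rw [hnorm, mul_div_assoc', mul_comm, mul_div_assoc]
        exact mul_le_of_le_one_right (by positivity) ((div_le_one (by positivity)).2 (by linarith))
    _ ≤ 4 * ∫ s in Ioi r, s ^ 2 * ‖fderiv ℝ u (s • ω) ω‖ ^ 2 :=
        integral_Ioi_norm_sq_le hr.le hd hdu hfi hfi'
    _ ≤ 4 * ∫ s in Ioi r, s ^ 2 * frob2 (jac u (s • ω)) := by
        gcongr 4 * ?_
        refine setIntegral_mono_on hfi' h2 measurableSet_Ioi fun s _ => ?_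
        gcongr
        simpa [hω] using norm_fderiv_apply_sq_le u (s • ω) ω

def hemisphereExterior (r : ℝ) : Set E3 := {x | r < ‖x‖ ∧ x 2 < 0}

lemma isOpen_hemisphereExterior (r : ℝ) : IsOpen (hemisphereExterior r) :=
  (isOpen_lt continuous_const continuous_norm).inter
    (isOpen_lt (EuclideanSpace.proj (𝕜 := ℝ) (2 : Fin 3)).continuous continuous_const)

lemma smul_mem_hemisphereExterior_iff {r s : ℝ} {ω : E3} (hω : ‖ω‖ = 1) (hω2 : ω 2 < 0)
    (hs : 0 < s) : s • ω ∈ hemisphereExterior r ↔ r < s := by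
  simp [hemisphereExterior, norm_smul, hω, abs_of_pos hs, mul_neg_of_pos_of_neg hs hω2]

lemma setOf_smul_mem_hemisphereExterior_of_neg {r : ℝ} (hr : 0 ≤ r) {ω : E3} (hω : ‖ω‖ = 1)
    (hω2 : ω 2 < 0) : {s : ℝ | 0 < s ∧ s • ω ∈ hemisphereExterior r} = Ioi r := by
  ext s
  constructor
  · rintro ⟨hs, hmem⟩
    exact (smul_mem_hemisphereExterior_iff hω hω2 hs).1 hmem
  · intro (hrs : r < s)
    have hs := hr.trans_lt hrs
    exact ⟨hs, (smul_mem_hemisphereExterior_iff hω hω2 hs).2 hrs⟩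

lemma setOf_smul_mem_hemisphereExterior_of_nonneg {r : ℝ} {ω : E3} (hω2 : 0 ≤ ω 2) :
    {s : ℝ | 0 < s ∧ s • ω ∈ hemisphereExterior r} = ∅ :=
  eq_empty_of_forall_notMem fun _ ⟨hs, _, hneg⟩ => hneg.not_ge (mul_nonneg hs.le hω2)

/-- Hardy-type inequality in the exterior of a hemisphere in the half-space. -/
theorem hardy_exterior_hemisphere (r : ℝ) (hr : 0 < r) :
    ∃ c : ℝ, 0 < c ∧ ∀ u : E3 → E3,
      ContDiffOn ℝ 1 u {x : E3 | r < ‖x‖ ∧ x 2 < 0} →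
      IntegrableOn (fun x => ‖u x‖^2 / (1 + ‖x‖^2)) {x : E3 | r < ‖x‖ ∧ x 2 < 0} →
      IntegrableOn (fun x => frob2 (jac u x)) {x : E3 | r < ‖x‖ ∧ x 2 < 0} →
      (∫ x in {x : E3 | r < ‖x‖ ∧ x 2 < 0}, ‖u x‖^2 / (1 + ‖x‖^2)) ≤
        c * ∫ x in {x : E3 | r < ‖x‖ ∧ x 2 < 0}, frob2 (jac u x) := by
  refine ⟨4, four_pos, fun u hu hI1 hI2 => ?_⟩
  refine setIntegral_le_mul_setIntegral_of_rays volume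
    (isOpen_hemisphereExterior r).measurableSet hI1 hI2 (.of_forall fun ω h1 h2 => ?_)
  have hω : ‖(ω : E3)‖ = 1 := by simp
  have hdim : Module.finrank ℝ E3 - 1 = 2 := by simp
  simp only [hdim] at h1 h2 ⊢
  rcases lt_or_ge ((ω : E3) 2) 0 with hω2 | hω2
  · rw [setOf_smul_mem_hemisphereExterior_of_neg hr.le hω hω2] at h1 h2 ⊢
    exact hardy_along_ray (isOpen_hemisphereExterior r) hu hω hr
      (fun s hs => (smul_mem_hemisphereExterior_iff hω hω2 (hr.trans hs)).2 hs) h1 h2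
  · simp [setOf_smul_mem_hemisphereExterior_of_nonneg hω2]

end
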